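/- arXiv:2508.01628 — 9 statements merged into one kernel-verified Lean document; each statement's English description precedes it below -/
import Mathlib

section
/- Let R be a commutative ring with identity. Then R is Noetherian if and only if every prime ideal of R is finitely generated. -/
/-- Cohen's theorem: a commutative ring is Noetherian iff every prime ideal
is finitely generated. -/
theorem cohen_theorem (R : Type*) [CommRing R] :
    IsNoetherianRing R ↔ ∀ P : Ideal R, P.IsPrime → P.FG :=
  ⟨fun _ P _ => IsNoetherian.noetherian P, IsNoetherianRing.of_prime⟩
end

section
/- Let φ: R → S be an integral ring extension and P a prime ideal of R such that the extension PS is a prime ideal of S. Then PS ∩ R = P and PS is the unique prime ideal of S lying over P. -/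
/-- If `R → S` is an injective integral extension and `P` is a prime of `R`
whose extension `PS` is prime in `S`, then `PS ∩ R = P` and `PS` is the unique
prime of `S` lying over `P`. -/
theorem integral_extension_unique_prime_over
    (R S : Type*) [CommRing R] [CommRing S] [Algebra R S]
    (hinj : Function.Injective (algebraMap R S))
    (hint : Algebra.IsIntegral R S)
    (P : Ideal R) (hP : P.IsPrime)
    (hPS : (P.map (algebraMap R S)).IsPrime) :
    (P.map (algebraMap R S)).comap (algebraMap R S) = P ∧
      ∀ Q : Ideal S, Q.IsPrime → Q.comap (algebraMap R S) = P →
        Q = P.map (algebraMap R S) := by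
  have hcomap : (P.map (algebraMap R S)).comap (algebraMap R S) = P := by
    -- going up: there is a prime Q ≥ map P over P
    obtain ⟨Q, hge, hQprime, hQcomap⟩ :=
      Ideal.exists_ideal_over_prime_of_isIntegral P ⊥ (Ideal.comap_bot_le_of_injective _ hinj)
    refine le_antisymm ?_ (Ideal.le_comap_map)
    calc (P.map (algebraMap R S)).comap (algebraMap R S)
        ≤ Q.comap (algebraMap R S) := Ideal.comap_mono (Ideal.map_le_iff_le_comap.mpr (hQcomap ▸ le_rfl))
      _ = P := hQcomap
  refine ⟨hcomap, fun Q hQprime hQcomap => ?_⟩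
  have hle : P.map (algebraMap R S) ≤ Q := Ideal.map_le_iff_le_comap.mpr (hQcomap ▸ le_rfl)
  by_contra hne
  have hlt : P.map (algebraMap R S) < Q := lt_of_le_of_ne hle (Ne.symm hne)
  obtain ⟨-, x, hxQ, hxP⟩ := SetLike.lt_iff_le_and_exists.mp hlt
  have := Ideal.comap_lt_comap_of_integral_mem_sdiff (I := P.map (algebraMap R S)) (J := Q)
    hle ⟨hxQ, hxP⟩ (hint.isIntegral x)
  rw [hcomap, hQcomap] at this
  exact lt_irrefl P this
end

section
/- Let R be a commutative ring and {R_i}_{i∈ℕ} a chain of subrings with R_i ⊆ R_{i+1} an integral extension for every i and R = ⋃_i R_i. Suppose for some n, P_n is a prime ideal of R_n such that P_n R_i is a prime ideal of R_i for every i ≥ n. Then P_n R is the unique prime ideal of R lying over P_n. -/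
section Aux

variable {R : Type*} [CommRing R] {A : ℕ → Subring R} (hmono : Monotone A)

/-- composition of inclusions -/
theorem aux_incl_comp {i j k : ℕ} (hij : i ≤ j) (hjk : j ≤ k) :
    (Subring.inclusion (hmono hjk)).comp (Subring.inclusion (hmono hij)) =
      Subring.inclusion (hmono (hij.trans hjk)) :=
  RingHom.ext fun x => Subtype.ext rfl

theorem aux_subtype_comp {i j : ℕ} (hij : i ≤ j) :
    ((A j).subtype).comp (Subring.inclusion (hmono hij)) = (A i).subtype :=
  RingHom.ext fun x => rfl

theorem aux_integral (hint : ∀ i, (Subring.inclusion (hmono (Nat.le_succ i))).IsIntegral)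
    {i j : ℕ} (hij : i ≤ j) : (Subring.inclusion (hmono hij)).IsIntegral := by
  induction j, hij using Nat.le_induction with
  | base =>
    have h : Subring.inclusion (hmono (le_refl i)) = RingHom.id (A i) :=
      RingHom.ext fun x => Subtype.ext rfl
    rw [h]
    exact RingHom.isIntegral_of_surjective _ Function.surjective_id
  | succ j hij ih =>
    rw [← aux_incl_comp hmono hij (Nat.le_succ j)]
    exact RingHom.IsIntegral.trans _ _ ih (hint j)

/-- lying over: contraction of extension is itself -/
theorem aux_comap_map {i j : ℕ} (hij : i ≤ j)
    (hint : ∀ i, (Subring.inclusion (hmono (Nat.le_succ i))).IsIntegral)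
    (P : Ideal (A i)) [P.IsPrime] :
    (P.map (Subring.inclusion (hmono hij))).comap (Subring.inclusion (hmono hij)) = P := by
  set f := Subring.inclusion (hmono hij) with hf
  letI : Algebra (A i) (A j) := f.toAlgebra
  haveI : Algebra.IsIntegral (A i) (A j) := ⟨aux_integral hmono hint hij⟩
  have halg : algebraMap (A i) (A j) = f := rfl
  have hbot : (⊥ : Ideal (A j)).comap (algebraMap (A i) (A j)) ≤ P := by
    intro x hx
    have h1 : f x = 0 := hx
    have h2 : ((x : ↥(A i)) : R) = 0 := congrArg Subtype.val h1
    have hx0 : x = 0 := Subtype.ext h2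
    rw [hx0]; exact P.zero_mem
  obtain ⟨Q, hQge, hQprime, hQcomap⟩ :=
    Ideal.exists_ideal_over_prime_of_isIntegral P ⊥ hbot
  refine le_antisymm ?_ (Ideal.le_comap_map)
  have hmaple : P.map f ≤ Q := by
    rw [Ideal.map_le_iff_le_comap]
    rw [halg] at hQcomap
    rw [hQcomap]
  calc (P.map f).comap f ≤ Q.comap f := Ideal.comap_mono hmaple
    _ = P := hQcomap

/-- incomparability -/
theorem aux_incomparable {S T : Type*} [CommRing S] [CommRing T] (f : S →+* T)
    (hf : f.IsIntegral) {I J : Ideal T} [I.IsPrime] (hle : I ≤ J)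
    (heq : I.comap f = J.comap f) : I = J := by
  by_contra hne
  have hlt : I < J := hle.lt_of_ne hne
  obtain ⟨x, hxJ, hxI⟩ := SetLike.exists_of_lt hlt
  letI : Algebra S T := f.toAlgebra
  exact (Ideal.comap_lt_comap_of_integral_mem_sdiff hle ⟨hxJ, hxI⟩ (hf x)).ne heq

end Aux

section Main

variable {R : Type*} [CommRing R] {A : ℕ → Subring R} (hmono : Monotone A)
variable {n : ℕ} (Pn : Ideal (A n))

theorem aux_push {i j : ℕ} (hni : n ≤ i) (hij : i ≤ j) {x : R} (hxi : x ∈ A i) (hxj : x ∈ A j)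
    (hmem : (⟨x, hxi⟩ : A i) ∈ Pn.map (Subring.inclusion (hmono hni))) :
    (⟨x, hxj⟩ : A j) ∈ Pn.map (Subring.inclusion (hmono (hni.trans hij))) := by
  have h1 := Ideal.mem_map_of_mem (Subring.inclusion (hmono hij)) hmem
  rw [Ideal.map_map, aux_incl_comp hmono hni hij] at h1
  have h2 : Subring.inclusion (hmono hij) (⟨x, hxi⟩ : A i) = (⟨x, hxj⟩ : A j) :=
    Subtype.ext rfl
  rwa [h2] at h1

theorem aux_mem_iff (hunion : ∀ x : R, ∃ i, x ∈ A i) (x : R) :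
    x ∈ Pn.map (A n).subtype ↔ ∃ i, ∃ h : n ≤ i, ∃ hx : x ∈ A i,
      (⟨x, hx⟩ : A i) ∈ Pn.map (Subring.inclusion (hmono h)) := by
  constructor
  · intro hx
    let T : Ideal R :=
      { carrier := {y : R | ∃ i, ∃ h : n ≤ i, ∃ hy : y ∈ A i,
          (⟨y, hy⟩ : A i) ∈ Pn.map (Subring.inclusion (hmono h))},
        zero_mem' := ⟨n, le_rfl, (A n).zero_mem, Submodule.zero_mem _⟩,
        add_mem' := by
          rintro a b ⟨i, hi, hai, ha⟩ ⟨j, hj, hbj, hb⟩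
          refine ⟨max i j, hi.trans (le_max_left i j),
            (A (max i j)).add_mem (hmono (le_max_left i j) hai)
              (hmono (le_max_right i j) hbj), ?_⟩
          have ha' := aux_push hmono Pn hi (le_max_left i j) hai
            (hmono (le_max_left i j) hai) ha
          have hb' := aux_push hmono Pn hj (le_max_right i j) hbj
            (hmono (le_max_right i j) hbj) hb
          have he : (⟨a + b, _⟩ : A (max i j)) =
              (⟨a, hmono (le_max_left i j) hai⟩ : A (max i j)) +
              ⟨b, hmono (le_max_right i j) hbj⟩ := Subtype.ext rfl
          rw [he]
          exact Ideal.add_mem _ ha' hb',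
        smul_mem' := by
          rintro c y ⟨i, hi, hyi, hy⟩
          obtain ⟨j, hcj⟩ := hunion c
          refine ⟨max i j, hi.trans (le_max_left i j),
            (A (max i j)).mul_mem (hmono (le_max_right i j) hcj)
              (hmono (le_max_left i j) hyi), ?_⟩
          have hy' := aux_push hmono Pn hi (le_max_left i j) hyi
            (hmono (le_max_left i j) hyi) hy
          have he : (⟨c • y, _⟩ : A (max i j)) =
              (⟨c, hmono (le_max_right i j) hcj⟩ : A (max i j)) *
              ⟨y, hmono (le_max_left i j) hyi⟩ := Subtype.ext rfl
          rw [he]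
          exact Ideal.mul_mem_left _ _ hy' }
    have hle : Pn.map (A n).subtype ≤ T := by
      rw [Ideal.map_le_iff_le_comap]
      intro p hp
      exact ⟨n, le_rfl, p.2, Ideal.mem_map_of_mem (Subring.inclusion (hmono le_rfl)) hp⟩
    exact hle hx
  · rintro ⟨i, h, hxi, hmem⟩
    have h2 : Pn.map (A n).subtype =
        (Pn.map (Subring.inclusion (hmono h))).map (A i).subtype := by
      rw [Ideal.map_map, aux_subtype_comp hmono h]
    rw [h2]
    exact Ideal.mem_map_of_mem _ hmem

end Main


/-- Let `R` be a commutative ring, `{Rᵢ}` an increasing chain of subrings with each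
extension `Rᵢ ⊆ Rᵢ₊₁` integral and `R = ⋃ᵢ Rᵢ`.  If `Pₙ` is a prime of `Rₙ` such that
`PₙRᵢ` is prime in `Rᵢ` for all `i ≥ n`, then `PₙR` is the unique prime of `R`
lying over `Pₙ`. -/
theorem chain_of_integral_extensions_unique_prime_over
    (R : Type*) [CommRing R] (A : ℕ → Subring R)
    (hmono : Monotone A)
    (hint : ∀ i, (Subring.inclusion (hmono (Nat.le_succ i))).IsIntegral)
    (hunion : ∀ x : R, ∃ i, x ∈ A i)
    (n : ℕ) (Pn : Ideal (A n)) (hPn : Pn.IsPrime)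
    (hprime : ∀ i (h : n ≤ i), (Pn.map (Subring.inclusion (hmono h))).IsPrime) :
    (Pn.map (A n).subtype).IsPrime ∧
      (Pn.map (A n).subtype).comap (A n).subtype = Pn ∧
      ∀ Q : Ideal R, Q.IsPrime → Q.comap (A n).subtype = Pn →
        Q = Pn.map (A n).subtype := by
  haveI := hPn
  have key := aux_mem_iff hmono Pn hunion
  have hIsPrime : (Pn.map (A n).subtype).IsPrime := by
    constructor
    · intro htop
      rw [Ideal.eq_top_iff_one _] at htop
      obtain ⟨i, hi, hone, hmem⟩ := (key 1).mp htop
      have he : (⟨(1 : R), hone⟩ : A i) = 1 := Subtype.ext rfl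
      rw [he] at hmem
      exact (hprime i hi).ne_top ((Ideal.eq_top_iff_one _).mpr hmem)
    · intro x y hxy
      obtain ⟨i, hi, hxyi, hmem⟩ := (key (x * y)).mp hxy
      obtain ⟨j, hxj⟩ := hunion x
      obtain ⟨k, hyk⟩ := hunion y
      set m := max i (max j k) with hm
      have him : i ≤ m := le_max_left _ _
      have hxm : x ∈ A m := hmono ((le_max_left j k).trans (le_max_right i _)) hxj
      have hym : y ∈ A m := hmono ((le_max_right j k).trans (le_max_right i _)) hyk
      have hmem' := aux_push hmono Pn hi him hxyi ((A m).mul_mem hxm hym) hmem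
      have he : (⟨x * y, _⟩ : A m) = (⟨x, hxm⟩ : A m) * ⟨y, hym⟩ := Subtype.ext rfl
      rw [he] at hmem'
      rcases (hprime m (hi.trans him)).mem_or_mem hmem' with h | h
      · exact Or.inl ((key x).mpr ⟨m, hi.trans him, hxm, h⟩)
      · exact Or.inr ((key y).mpr ⟨m, hi.trans him, hym, h⟩)
  have hcomap : (Pn.map (A n).subtype).comap (A n).subtype = Pn := by
    refine le_antisymm ?_ Ideal.le_comap_map
    intro p hp
    obtain ⟨i, hi, hpi, hmem⟩ := (key ((A n).subtype p)).mp hp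
    have h1 : p ∈ (Pn.map (Subring.inclusion (hmono hi))).comap (Subring.inclusion (hmono hi)) := by
      have he : Subring.inclusion (hmono hi) p = (⟨((A n).subtype p : R), hpi⟩ : A i) :=
        Subtype.ext rfl
      rw [Ideal.mem_comap, he]
      exact hmem
    rwa [aux_comap_map hmono hi hint Pn] at h1
  refine ⟨hIsPrime, hcomap, ?_⟩
  intro Q hQ hQcomap
  refine le_antisymm ?_ (Ideal.map_le_iff_le_comap.mpr (hQcomap ▸ le_rfl))
  intro x hxQ
  obtain ⟨j, hxj⟩ := hunion x
  set i := max n j with hidef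
  have hni : n ≤ i := le_max_left _ _
  have hxi : x ∈ A i := hmono (le_max_right n j) hxj
  set Qi := Q.comap (A i).subtype with hQi
  haveI : Qi.IsPrime := Ideal.IsPrime.comap _
  have hQicomap : Qi.comap (Subring.inclusion (hmono hni)) = Pn := by
    rw [hQi, Ideal.comap_comap, aux_subtype_comp hmono hni, hQcomap]
  have hle : Pn.map (Subring.inclusion (hmono hni)) ≤ Qi :=
    Ideal.map_le_iff_le_comap.mpr (hQicomap ▸ le_rfl)
  haveI := hprime i hni
  have heq : Pn.map (Subring.inclusion (hmono hni)) = Qi :=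
    aux_incomparable _ (aux_integral hmono hint hni) hle
      (by rw [aux_comap_map hmono hni hint Pn, hQicomap])
  refine (key x).mpr ⟨i, hni, hxi, ?_⟩
  rw [heq]
  exact hxQ
end

section
/- Let k be a field, K a purely transcendental field extension of k (generated by a set of algebraically independent elements over k), and R a k-algebra that is an integral domain. Then K ⊗_k R is an integral domain. -/
/-!
Via `α`, `K` is the fraction field of `k[X_i : i ∈ I]`. Localization commutes with base change,
so `K ⊗[k] R` is the localization of `k[X_i] ⊗[k] R ≅ R[X_i]` at the nonzero polynomials over `k`.
These stay nonzero in the domain `R[X_i]`, and a localization of a domain at nonzero elements is a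
domain.
-/

open scoped TensorProduct

open MvPolynomial in
theorem AlgebraicIndependent.isFractionRing_of_adjoin_eq_top {ι F E : Type*} [Field F] [Field E]
    [Algebra F E] {x : ι → E} (hx : AlgebraicIndependent F x)
    (htop : IntermediateField.adjoin F (Set.range x) = ⊤) :
    letI := (aeval x : MvPolynomial ι F →ₐ[F] E).toAlgebra
    IsFractionRing (MvPolynomial ι F) E :=
  letI := (aeval x : MvPolynomial ι F →ₐ[F] E).toAlgebra
  haveI : FaithfulSMul (MvPolynomial ι F) E := (faithfulSMul_iff_algebraMap_injective _ _).mpr hx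
  .of_field _ _ fun z ↦
    (IntermediateField.mem_adjoin_range_iff F x z).mp (htop ▸ IntermediateField.mem_top)

instance MvPolynomial.isDomain_tensorProduct {σ k R : Type*} [CommRing k] [CommRing R]
    [IsDomain R] [Algebra k R] : IsDomain (MvPolynomial σ k ⊗[k] R) :=
  ((Algebra.TensorProduct.comm k _ R).toRingEquiv.trans
    (MvPolynomial.algebraTensorAlgEquiv k R).toRingEquiv).toMulEquiv.isDomain _

theorem IsFractionRing.isDomain_tensorProduct (k A K R : Type*) [CommRing k] [CommRing A]
    [Algebra k A] [Module.Flat k A] [Field K] [Algebra k K] [Algebra A K] [IsScalarTower k A K]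
    [IsFractionRing A K] [CommRing R] [Algebra k R] [FaithfulSMul k R] [IsDomain (A ⊗[k] R)] :
    IsDomain (K ⊗[k] R) := by
  let : Algebra (A ⊗[k] R) (K ⊗[k] R) :=
    (Algebra.TensorProduct.map (IsScalarTower.toAlgHom k A K) (AlgHom.id k R)).toAlgebra
  have : IsScalarTower A (A ⊗[k] R) (K ⊗[k] R) := .of_algebraMap_eq fun _ ↦ rfl
  have := IsLocalization.tensorProduct_tensorProduct k R (nonZeroDivisors A) K
    (by ext; simp [RingHom.algebraMap_toAlgebra])
  refine IsLocalization.isDomain_of_le_nonZeroDivisors _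
    (M := Algebra.algebraMapSubmonoid (A ⊗[k] R) (nonZeroDivisors A)) ?_
  rintro _ ⟨a, ha, rfl⟩
  have := (algebraMap A K).domain_nontrivial
  exact mem_nonZeroDivisors_of_ne_zero <|
    (map_ne_zero_iff _ (Algebra.TensorProduct.includeLeft_injective (S := A)
      (FaithfulSMul.algebraMap_injective k R))).mpr (nonZeroDivisors.ne_zero ha)

/-- If `K` is a purely transcendental field extension of `k` and `R` is a
`k`-algebra which is a domain, then `K ⊗_k R` is a domain. -/
theorem tensor_purely_transcendental_isDomain
    (k K : Type*) [Field k] [Field K] [Algebra k K]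
    {I : Type*} (α : I → K)
    (halg : AlgebraicIndependent k α)
    (hgen : IntermediateField.adjoin k (Set.range α) = ⊤)
    (R : Type*) [CommRing R] [IsDomain R] [Algebra k R] :
    IsDomain (K ⊗[k] R) := by
  let : Algebra (MvPolynomial I k) K := (MvPolynomial.aeval α).toAlgebra
  have := halg.isFractionRing_of_adjoin_eq_top hgen
  exact IsFractionRing.isDomain_tensorProduct k (MvPolynomial I k) K R
end

section
/- Let k be a field, K a purely transcendental field extension of k, and R a commutative k-algebra. For every prime ideal P of R, the extension P(K ⊗_k R) is a prime ideal of K ⊗_k R. -/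
/-!
Put `D = R ⧸ P`. Right exactness of `K ⊗_k -` identifies `P(K ⊗_k R)` with the kernel of
`K ⊗_k R → K ⊗_k D`, so it suffices that `K ⊗_k D` is a domain. As `K ≅ Frac k[X_i]`, the ring
`K ⊗_k D` is the localization of `k[X_i] ⊗_k D ≅ D[X_i]` at the images `f ⊗ 1` of the nonzero
polynomials `f`, and these are nonzero because tensoring over a field is exact.
-/

open scoped TensorProduct nonZeroDivisors

open Algebra.TensorProduct in
theorem Ideal.isPrime_map_includeRight {R A S : Type*} [CommRing R] [CommRing A] [Algebra R A]
    [CommRing S] [Algebra R S] (P : Ideal S) [P.IsPrime] [IsDomain (A ⊗[R] (S ⧸ P))] :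
    (P.map (includeRight : S →ₐ[R] A ⊗[R] S).toRingHom).IsPrime := by
  have hker : RingHom.ker (Algebra.TensorProduct.map (AlgHom.id R A) (Ideal.Quotient.mkₐ R P)) =
      P.map (includeRight : S →ₐ[R] A ⊗[R] S).toRingHom := by
    rw [lTensor_ker _ (Ideal.Quotient.mkₐ_surjective R P),
      show RingHom.ker (Ideal.Quotient.mkₐ R P) = P from Ideal.Quotient.mkₐ_ker R P]
    rfl
  exact hker ▸ RingHom.ker_isPrime _

theorem MvPolynomial.isDomain_tensorProduct_s4 (σ R S : Type*) [CommRing R] [CommRing S]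
    [Algebra R S] [IsDomain S] : IsDomain (MvPolynomial σ R ⊗[R] S) :=
  ((Algebra.TensorProduct.comm R _ S).toRingEquiv.trans
    (MvPolynomial.algebraTensorAlgEquiv (σ := σ) R S).toRingEquiv).toMulEquiv.isDomain

open Algebra.TensorProduct in
theorem IsLocalization.isDomain_tensorProduct_s4 {R A S : Type*} [CommRing R] [CommRing A]
    [Algebra R A] [CommRing S] [Algebra R S] [Module.Flat R A] [IsDomain (A ⊗[R] S)]
    (hS : Function.Injective (algebraMap R S)) (M : Submonoid A) (hM : M ≤ A⁰)
    (B : Type*) [CommRing B] [Algebra R B] [Algebra A B] [IsScalarTower R A B]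
    [IsLocalization M B] : IsDomain (B ⊗[R] S) := by
  let := (Algebra.TensorProduct.map (IsScalarTower.toAlgHom R A B) (AlgHom.id R S)).toAlgebra
  have : IsScalarTower A (A ⊗[R] S) (B ⊗[R] S) := .of_algebraMap_eq fun a => by
    simp [RingHom.algebraMap_toAlgebra]
  have := IsLocalization.tensorProduct_tensorProduct R S M B
    (by ext; simp [RingHom.algebraMap_toAlgebra])
  have : Nontrivial A := (includeLeft : A →ₐ[R] A ⊗[R] S).toRingHom.domain_nontrivial
  refine IsLocalization.isDomain_of_le_nonZeroDivisors (B ⊗[R] S)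
    (M := Algebra.algebraMapSubmonoid (A ⊗[R] S) M) ?_
  rintro _ ⟨a, ha, rfl⟩
  refine mem_nonZeroDivisors_of_ne_zero fun h0 => nonZeroDivisors.ne_zero (hM ha) ?_
  exact includeLeft_injective (S := R) hS (h0.trans (map_zero _).symm)

theorem AlgebraicIndependent.isDomain_tensorProduct_s4 {k K : Type*} [Field k] [Field K]
    [Algebra k K] {I : Type*} {α : I → K} (halg : AlgebraicIndependent k α)
    (hgen : IntermediateField.adjoin k (Set.range α) = ⊤)
    (D : Type*) [CommRing D] [IsDomain D] [Algebra k D] : IsDomain (K ⊗[k] D) := by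
  let e : FractionRing (MvPolynomial I k) ≃ₐ[k] K :=
    halg.aevalEquivField.trans ((IntermediateField.equivOfEq hgen).trans IntermediateField.topEquiv)
  have := MvPolynomial.isDomain_tensorProduct_s4 I k D
  have := IsLocalization.isDomain_tensorProduct_s4 (algebraMap k D).injective
    (MvPolynomial I k)⁰ le_rfl (FractionRing (MvPolynomial I k))
  exact (Algebra.TensorProduct.congr e AlgEquiv.refl).symm.toMulEquiv.isDomain

/-- If `K` is a purely transcendental field extension of `k` and `R` is a
commutative `k`-algebra, then for every prime ideal `P` of `R` the extension
`P(K ⊗_k R)` is a prime ideal of `K ⊗_k R`. -/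
theorem tensor_purely_transcendental_map_prime
    (k K : Type*) [Field k] [Field K] [Algebra k K]
    {I : Type*} (α : I → K)
    (halg : AlgebraicIndependent k α)
    (hgen : IntermediateField.adjoin k (Set.range α) = ⊤)
    (R : Type*) [CommRing R] [Algebra k R]
    (P : Ideal R) (hP : P.IsPrime) :
    (P.map (Algebra.TensorProduct.includeRight : R →ₐ[k] K ⊗[k] R).toRingHom).IsPrime := by
  have := halg.isDomain_tensorProduct_s4 hgen (R ⧸ P)
  exact P.isPrime_map_includeRight
end

section
/- Let G be a torsion-free abelian group and F a G-graded field. Then F is an integral domain. -/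
/-!
A torsion-free abelian group has unique sums: any two nonempty finite sets `A`, `B` have an
element of `A + B` with exactly one representation `a + b`, because `A ∪ B` generates a finitely
generated torsion-free group, i.e. some `ℤⁿ`, which can be ordered. Taking `A`, `B` to be the
supports of the homogeneous decompositions of nonzero `a`, `b`, the component of `a * b` in that
unique degree is the product of two nonzero homogeneous elements, hence a unit, so `a * b ≠ 0`.
-/

open Finset in
instance (priority := low) IsAddTorsionFree.to_uniqueSums {G : Type*} [AddCommGroup G]
    [IsAddTorsionFree G] : UniqueSums G where
  uniqueAdd_of_nonempty {A B} hA hB := by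
    classical
    let H := AddSubgroup.closure ((A ∪ B : Finset G) : Set G)
    have hAH : ∀ a ∈ A, a ∈ H := fun a ha => AddSubgroup.subset_closure (by simp [ha])
    have hBH : ∀ b ∈ B, b ∈ H := fun b hb => AddSubgroup.subset_closure (by simp [hb])
    obtain ⟨a, ha⟩ := hA
    obtain ⟨b, hb⟩ := hB
    obtain ⟨a0, ha0, b0, hb0, h⟩ := UniqueSums.uniqueAdd_of_nonempty
      (A := A.subtype (· ∈ H)) (B := B.subtype (· ∈ H))
      ⟨⟨a, hAH a ha⟩, mem_subtype.mpr ha⟩ ⟨⟨b, hBH b hb⟩, mem_subtype.mpr hb⟩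
    refine ⟨a0, mem_subtype.mp ha0, b0, mem_subtype.mp hb0, ?_⟩
    rwa [← UniqueAdd.addHom_map_iff (Function.Embedding.subtype _) (fun _ _ => rfl),
      subtype_map_of_mem hAH, subtype_map_of_mem hBH] at h

namespace DirectSum

variable {ι R σ : Type*} [DecidableEq ι] [AddMonoid ι] [Semiring R] [SetLike σ R]
  [AddSubmonoidClass σ R] (𝒜 : ι → σ) [SetLike.GradedMonoid 𝒜]
  [∀ (i : ι) (x : 𝒜 i), Decidable (x ≠ 0)]

theorem coe_mul_apply_of_uniqueAdd {r r' : ⨁ i, 𝒜 i} {i j : ι}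
    (h : UniqueAdd r.support r'.support i j) : ((r * r') (i + j) : R) = r i * r' j := by
  rw [coe_mul_apply, Finset.sum_eq_single (i, j)]
  · rintro ⟨i', j'⟩ hmem hne
    simp only [Finset.mem_filter, Finset.mem_product] at hmem
    obtain ⟨⟨hi', hj'⟩, hsum⟩ := hmem
    exact absurd (Prod.ext_iff.mpr (h hi' hj' hsum)) hne
  · intro hmem
    simp only [Finset.mem_filter, Finset.mem_product, DFinsupp.mem_support_iff, ne_eq,
      and_true, not_and_or, not_not] at hmem
    rcases hmem with hi | hj <;> simp [*]

end DirectSum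

namespace GradedRing

variable {ι R σ : Type*} [DecidableEq ι] [AddMonoid ι] [UniqueSums ι] [Semiring R] [SetLike σ R]
  [AddSubmonoidClass σ R] (𝒜 : ι → σ) [GradedRing 𝒜]

open DirectSum in
theorem noZeroDivisors_of_uniqueSums
    (h : ∀ x y : R, x ≠ 0 → y ≠ 0 → SetLike.IsHomogeneousElem 𝒜 x →
      SetLike.IsHomogeneousElem 𝒜 y → x * y ≠ 0) : NoZeroDivisors R where
  eq_zero_or_eq_zero_of_mul_eq_zero {a b} hab := by
    classical
    by_contra! hne
    have hsupp : ∀ x : R, x ≠ 0 → (decompose 𝒜 x).support.Nonempty := fun x hx =>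
      Finset.nonempty_iff_ne_empty.mpr <| DFinsupp.support_eq_empty.not.mpr <| by
        rwa [← decompose_zero 𝒜, (decompose 𝒜).injective.eq_iff]
    obtain ⟨i, hi, j, hj, huniq⟩ :=
      UniqueSums.uniqueAdd_of_nonempty (hsupp a hne.1) (hsupp b hne.2)
    have hcomp := coe_mul_apply_of_uniqueAdd 𝒜 huniq
    rw [← decompose_mul, hab, decompose_zero, DirectSum.zero_apply, ZeroMemClass.coe_zero] at hcomp
    exact h _ _ (by simpa using hi) (by simpa using hj) ⟨i, SetLike.coe_mem _⟩
      ⟨j, SetLike.coe_mem _⟩ hcomp.symm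

end GradedRing

/-- Let `G` be a torsion-free abelian group and `F` a `G`-graded field (every
nonzero homogeneous element is a unit).  Then `F` is an integral domain. -/
theorem gradedField_isDomain_of_torsionFree
    (G : Type*) [AddCommGroup G] [DecidableEq G]
    (htf : ∀ (g : G) (n : ℕ), n ≠ 0 → n • g = 0 → g = 0)
    (F : Type*) [CommRing F] [Nontrivial F]
    (𝒜 : G → AddSubgroup F) [GradedRing 𝒜]
    (hfield : ∀ x : F, x ≠ 0 → SetLike.IsHomogeneousElem 𝒜 x → IsUnit x) :
    IsDomain F := by
  have : IsAddTorsionFree G :=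
    ⟨fun n hn a b hab => sub_eq_zero.mp (htf _ n hn (by rw [nsmul_sub, sub_eq_zero]; exact hab))⟩
  have : NoZeroDivisors F := GradedRing.noZeroDivisors_of_uniqueSums 𝒜
    fun x y hx hy hxh hyh => ((hfield x hx hxh).mul (hfield y hy hyh)).ne_zero
  exact NoZeroDivisors.to_isDomain F
end

section
/- Let G be a torsion-free abelian group of rank 1 (i.e., G embeds into ℚ). Then every G-graded division ring F over a field k with k = F_0 central in F is commutative. -/
/-!
Any two degrees `g, h` generate a finitely generated subgroup of `G ↪ ℚ`, which has bounded
denominators and is therefore cyclic, say generated by `w`. A nonzero element `u` of degree `w`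
is a unit, and every homogeneous element of degree `n • w` is `c * u ^ n` with `c` of degree
`0`, hence central. Two such elements commute because powers of `u` do, and homogeneous
components span `F`.
-/

open AddSubgroup

theorem Rat.mem_zmultiples_inv_of_den_dvd {q : ℚ} {N : ℕ} (hN : N ≠ 0) (h : q.den ∣ N) :
    q ∈ zmultiples (N : ℚ)⁻¹ := by
  obtain ⟨k, rfl⟩ := h
  refine ⟨q.num * k, ?_⟩
  have hk : (k : ℚ) ≠ 0 := by simp_all
  simp only [zsmul_eq_mul, Nat.cast_mul, Int.cast_mul, Int.cast_natCast]
  field_simp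
  rw [← Rat.mul_den_eq_num, mul_comm]

theorem exists_mem_zmultiples_of_injective_rat {G : Type*} [AddCommGroup G] (φ : G →+ ℚ)
    (hφ : Function.Injective φ) (g h : G) : ∃ w : G, g ∈ zmultiples w ∧ h ∈ zmultiples w := by
  set N := (φ g).den * (φ h).den
  have hN : N ≠ 0 := by positivity
  have hle : closure {g, h} ≤ (zmultiples (N : ℚ)⁻¹).comap φ := by
    rw [closure_le, Set.insert_subset_iff, Set.singleton_subset_iff]
    exact ⟨Rat.mem_zmultiples_inv_of_den_dvd hN (dvd_mul_right _ _),
      Rat.mem_zmultiples_inv_of_den_dvd hN (dvd_mul_left _ _)⟩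
  have : IsAddCyclic (closure {g, h}) :=
    isAddCyclic_of_injective (G' := zmultiples (N : ℚ)⁻¹)
      ((φ.comp (closure {g, h}).subtype).codRestrict _ fun x => hle x.2)
      fun x y hxy => Subtype.val_injective (hφ (congrArg Subtype.val hxy))
  obtain ⟨w, hw⟩ := (closure {g, h}).isAddCyclic_iff_exists_zmultiples_eq_top.mp this
  exact ⟨w, hw ▸ subset_closure (by simp), hw ▸ subset_closure (by simp)⟩

namespace SetLike

variable {ι F : Type*} [DecidableEq ι] [Ring F] (𝒜 : ι → AddSubgroup F)

section AddGroup

variable [AddGroup ι] [GradedRing 𝒜]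

-- `u` times the degree `-g` component of `u⁻¹` is the degree `0` component of `1`, i.e. `1`.
theorem val_inv_mem_graded {g : ι} {u : Fˣ} (hu : (u : F) ∈ 𝒜 g) :
    ((u⁻¹ : Fˣ) : F) ∈ 𝒜 (-g) := by
  have h := DirectSum.coe_decompose_mul_add_of_left_mem 𝒜 (b := ((u⁻¹ : Fˣ) : F)) (j := -g) hu
  rw [Units.mul_inv, add_neg_cancel,
    DirectSum.decompose_of_mem_same 𝒜 (one_mem_graded 𝒜)] at h
  rw [Units.inv_eq_of_mul_eq_one_right h.symm]
  exact coe_mem _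

theorem val_zpow_mem_graded {w : ι} {u : Fˣ} (hu : (u : F) ∈ 𝒜 w) (n : ℤ) :
    ((u ^ n : Fˣ) : F) ∈ 𝒜 (n • w) := by
  obtain ⟨n, rfl | rfl⟩ := n.eq_nat_or_neg
  · simpa using pow_mem_graded n hu
  · simpa using val_inv_mem_graded 𝒜 (u := u ^ n) (by simpa using pow_mem_graded n hu)

theorem exists_mem_graded_zero_mul_zpow {w : ι} {u : Fˣ} (hu : (u : F) ∈ 𝒜 w) {n : ℤ} {x : F}
    (hx : x ∈ 𝒜 (n • w)) : ∃ c ∈ 𝒜 0, x = c * ((u ^ n : Fˣ) : F) := by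
  refine ⟨x * ((u ^ (-n) : Fˣ) : F), ?_, by simp⟩
  simpa using mul_mem_graded hx (val_zpow_mem_graded 𝒜 hu (-n))

theorem commute_of_mem_graded_zsmul (hcentral : ∀ c ∈ 𝒜 0, ∀ y : F, Commute c y) {w : ι}
    {u : Fˣ} (hu : (u : F) ∈ 𝒜 w) {a b : ℤ} {x y : F} (hx : x ∈ 𝒜 (a • w)) (hy : y ∈ 𝒜 (b • w)) :
    Commute x y := by
  obtain ⟨c, hc, rfl⟩ := exists_mem_graded_zero_mul_zpow 𝒜 hu hx
  obtain ⟨d, hd, rfl⟩ := exists_mem_graded_zero_mul_zpow 𝒜 hu hy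
  have hpow : Commute ((u ^ a : Fˣ) : F) ((u ^ b : Fˣ) : F) :=
    ((Commute.refl u).zpow_zpow a b).units_val
  exact (hcentral c hc _).mul_left ((hcentral d hd _).symm.mul_right hpow)

end AddGroup

theorem commute_of_commute_homogeneous [AddMonoid ι] [GradedRing 𝒜]
    (h : ∀ i j, ∀ x ∈ 𝒜 i, ∀ y ∈ 𝒜 j, Commute x y) (x y : F) : Commute x y := by
  classical
  rw [← DirectSum.sum_support_decompose 𝒜 x, ← DirectSum.sum_support_decompose 𝒜 y]
  exact Commute.sum_left _ _ _ fun i _ => Commute.sum_right _ _ _ fun j _ =>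
    h i j _ (coe_mem _) _ (coe_mem _)

end SetLike

theorem graded_division_ring_rank_one_commutative_general
    (G : Type*) [AddCommGroup G] [DecidableEq G]
    (φ : G →+ ℚ) (hφ : Function.Injective φ)
    (F : Type*) [Ring F]
    (𝒜 : G → AddSubgroup F) [GradedRing 𝒜]
    (hcentral : ∀ x ∈ 𝒜 (0 : G), ∀ y : F, x * y = y * x)
    (hdiv : ∀ x : F, x ≠ 0 → SetLike.IsHomogeneousElem 𝒜 x → IsUnit x)
    (hsupp : ∀ g : G, 𝒜 g ≠ ⊥) :
    ∀ x y : F, x * y = y * x := by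
  have hhomogeneous : ∀ i j, ∀ x ∈ 𝒜 i, ∀ y ∈ 𝒜 j, Commute x y := by
    intro i j x hx y hy
    obtain ⟨w, ⟨a, rfl⟩, ⟨b, rfl⟩⟩ := exists_mem_zmultiples_of_injective_rat φ hφ i j
    obtain ⟨z, hz, hz0⟩ := ((𝒜 w).bot_or_exists_ne_zero).resolve_left (hsupp w)
    obtain ⟨u, rfl⟩ := hdiv z hz0 ⟨w, hz⟩
    exact SetLike.commute_of_mem_graded_zsmul 𝒜 hcentral hz hx hy
  exact fun x y => SetLike.commute_of_commute_homogeneous 𝒜 hhomogeneous x y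

/-- Let `G` be a torsion-free abelian group of rank 1 (i.e. `G` embeds into
`ℚ`), and let `F` be a `G`-graded division ring over a field `k = F₀` contained
in the center of `F`, supported on all of `G`.  Then `F` is commutative. -/
theorem graded_division_ring_rank_one_commutative
    (G : Type*) [AddCommGroup G] [DecidableEq G]
    (φ : G →+ ℚ) (hφ : Function.Injective φ)
    (F : Type*) [Ring F] [Nontrivial F]
    (𝒜 : G → AddSubgroup F) [GradedRing 𝒜]
    (hcentral : ∀ x ∈ 𝒜 (0 : G), ∀ y : F, x * y = y * x)
    (hdiv : ∀ x : F, x ≠ 0 → SetLike.IsHomogeneousElem 𝒜 x → IsUnit x)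
    (hsupp : ∀ g : G, 𝒜 g ≠ ⊥) :
    ∀ x y : F, x * y = y * x :=
  graded_division_ring_rank_one_commutative_general G φ hφ F 𝒜 hcentral hdiv hsupp
end

section
/- Let G be a subgroup of ℚ of the form G = ⋃_i (1/n_i)ℤ with n_i | n_{i+1} (an increasing union of cyclic subgroups), let k be a field in which every element has an n-th root for every n ≥ 1 (k is root-closed), and let F be a G-graded field with F_0 = k and F_g ≠ 0 for all g ∈ G. Then F is isomorphic as a G-graded k-algebra to the group algebra k[G]. -/
/-!
Since `k` is root-closed, `kˣ` is a divisible, hence injective, abelian group, so the inclusion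
`kˣ → Fˣ` has a retraction `r`. Because `F₀ = k`, two homogeneous units of the same degree differ
by a factor in `kˣ`, so each degree contains exactly one homogeneous unit in `ker r`; these units
form a homomorphism `s : G → Fˣ`. The induced map `k[G] → F` is graded, and bijective because each
`F_g` is the line `k · s g`.
-/

open DirectSum

section GradedRing

variable {ι R σ : Type*} [DecidableEq ι] [AddGroup ι] [Semiring R] [SetLike σ R]
  [AddSubmonoidClass σ R] (𝒜 : ι → σ) [GradedRing 𝒜]

theorem Units.val_inv_mem_graded {u : Rˣ} {i : ι} (hu : (u : R) ∈ 𝒜 i) :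
    ((u⁻¹ : Rˣ) : R) ∈ 𝒜 (-i) := by
  have hcomp : (u : R) * (decompose 𝒜 ((u⁻¹ : Rˣ) : R) (-i) : R) = 1 := by
    lift (u : R) to 𝒜 i using hu with x hx
    rw [← coe_of_mul_apply_add, ← decompose_coe, ← decompose_mul, hx, Units.mul_inv,
      add_neg_cancel, decompose_of_mem_same 𝒜 SetLike.GradedOne.one_mem]
  have hinv : (decompose 𝒜 ((u⁻¹ : Rˣ) : R) (-i) : R) = ((u⁻¹ : Rˣ) : R) := by
    rw [← Units.inv_mul_cancel_left u (decompose 𝒜 _ (-i) : R), hcomp, mul_one]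
  exact hinv ▸ SetLike.coe_mem _

end GradedRing

section GradedAlgebra

variable {ι k F : Type*} [DecidableEq ι] [AddGroup ι] [CommSemiring k] [Semiring F] [Algebra k F]
  (𝒜 : ι → Submodule k F) [GradedAlgebra 𝒜]

theorem Units.exists_eq_smul_of_mem_graded (h𝒜₀ : ∀ x ∈ 𝒜 0, ∃ c : k, x = algebraMap k F c)
    {u : Fˣ} {i : ι} (hu : (u : F) ∈ 𝒜 i) {x : F} (hx : x ∈ 𝒜 i) : ∃ c : k, x = c • (u : F) := by
  have hmem : x * ((u⁻¹ : Fˣ) : F) ∈ 𝒜 0 := by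
    simpa using SetLike.mul_mem_graded hx (Units.val_inv_mem_graded 𝒜 hu)
  obtain ⟨c, hc⟩ := h𝒜₀ _ hmem
  exact ⟨c, by rw [Algebra.smul_def, ← hc, Units.inv_mul_cancel_right]⟩

end GradedAlgebra

noncomputable abbrev Units.divisibleByIntOfExistsPowEq {k : Type*} [Field k]
    (hroot : ∀ (m : ℕ) (c : k), 0 < m → ∃ c' : k, c' ^ m = c) : DivisibleBy (Additive kˣ) ℤ :=
  letI : DivisibleBy (Additive kˣ) ℕ := divisibleByOfSMulRightSurj _ _ fun {m} hm c => by
    obtain ⟨c', hc'⟩ := hroot m (Additive.toMul c : kˣ) (Nat.pos_of_ne_zero hm)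
    have hc'0 : c' ≠ 0 := by
      rintro rfl
      exact (Additive.toMul c).ne_zero (by rw [← hc', zero_pow hm])
    have hroot' : Units.mk0 c' hc'0 ^ m = Additive.toMul c := Units.ext (by simpa using hc')
    exact ⟨Additive.ofMul (Units.mk0 c' hc'0), by
      simp only [← ofMul_pow, hroot', ofMul_toMul]⟩
  AddGroup.divisibleByIntOfDivisibleByNat _

section Splitting

variable {ι k F : Type*} [DecidableEq ι] [AddCommGroup ι] [Field k] [CommRing F] [Nontrivial F]
  [Algebra k F] (𝒜 : ι → Submodule k F) [GradedAlgebra 𝒜]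

theorem Units.exists_retraction_map_algebraMap [DivisibleBy (Additive kˣ) ℤ] :
    ∃ r : Additive Fˣ →+ Additive kˣ,
      r.comp (Units.map (algebraMap k F : k →* F)).toAdditive = AddMonoidHom.id _ :=
  (Module.Baer.of_divisible _).extension_property_addMonoidHom _
    (Units.map_injective (algebraMap k F).injective) _

theorem Units.exists_eq_map_algebraMap_mul_of_mem_graded
    (h𝒜₀ : ∀ x ∈ 𝒜 0, ∃ c : k, x = algebraMap k F c)
    {u v : Fˣ} {i : ι} (hu : (u : F) ∈ 𝒜 i) (hv : (v : F) ∈ 𝒜 i) :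
    ∃ c : kˣ, u = Units.map (algebraMap k F : k →* F) c * v := by
  obtain ⟨c, hc⟩ := Units.exists_eq_smul_of_mem_graded 𝒜 h𝒜₀ hv hu
  have hc0 : c ≠ 0 := by
    rintro rfl
    exact u.ne_zero (by rw [hc, zero_smul])
  exact ⟨Units.mk0 c hc0, Units.ext (by simpa [Algebra.smul_def] using hc)⟩

theorem Units.eq_of_mem_graded_of_retraction_eq (h𝒜₀ : ∀ x ∈ 𝒜 0, ∃ c : k, x = algebraMap k F c)
    {r : Additive Fˣ →+ Additive kˣ}
    (hr : r.comp (Units.map (algebraMap k F : k →* F)).toAdditive = AddMonoidHom.id _)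
    {u v : Fˣ} {i : ι} (hu : (u : F) ∈ 𝒜 i) (hv : (v : F) ∈ 𝒜 i)
    (huv : r (Additive.ofMul u) = r (Additive.ofMul v)) : u = v := by
  obtain ⟨c, rfl⟩ := Units.exists_eq_map_algebraMap_mul_of_mem_graded 𝒜 h𝒜₀ hu hv
  have hrc : r (Additive.ofMul (Units.map (algebraMap k F : k →* F) c)) = Additive.ofMul c :=
    DFunLike.congr_fun hr (Additive.ofMul c)
  rw [ofMul_mul, map_add, hrc, add_eq_right, ofMul_eq_zero] at huv
  rw [huv, map_one, one_mul]

theorem exists_monoidHom_units_mem_graded [DivisibleBy (Additive kˣ) ℤ]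
    (h𝒜₀ : ∀ x ∈ 𝒜 0, ∃ c : k, x = algebraMap k F c) (hunit : ∀ i, ∃ u : Fˣ, (u : F) ∈ 𝒜 i) :
    ∃ s : Multiplicative ι →* Fˣ, ∀ i, (s (Multiplicative.ofAdd i) : F) ∈ 𝒜 i := by
  obtain ⟨r, hr⟩ := Units.exists_retraction_map_algebraMap (k := k) (F := F)
  have hnormalize (i : ι) : ∃ v : Fˣ, (v : F) ∈ 𝒜 i ∧ r (.ofMul v) = 0 := by
    obtain ⟨u, hu⟩ := hunit i
    set c := Additive.toMul (r (.ofMul u))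
    have hrc : r (.ofMul (Units.map (algebraMap k F : k →* F) c)) = .ofMul c :=
      DFunLike.congr_fun hr (.ofMul c)
    refine ⟨u * (Units.map (algebraMap k F : k →* F) c)⁻¹, ?_, ?_⟩
    · rw [Units.val_mul, ← map_inv, Units.coe_map, mul_comm, MonoidHom.coe_coe,
        ← Algebra.smul_def]
      exact Submodule.smul_mem _ ((c⁻¹ : kˣ) : k) hu
    · rw [ofMul_mul, ofMul_inv, map_add, map_neg, hrc, ofMul_toMul, add_neg_cancel]
  choose s hs_mem hs_ker using hnormalize
  refine ⟨MonoidHom.mk' (fun i => s i.toAdd) fun i j => ?_, hs_mem⟩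
  exact Units.eq_of_mem_graded_of_retraction_eq 𝒜 h𝒜₀ hr (hs_mem _)
    (SetLike.mul_mem_graded (hs_mem _) (hs_mem _))
    (by rw [ofMul_mul, map_add, hs_ker, hs_ker, hs_ker, add_zero])

end Splitting

theorem AddMonoidAlgebra.decompose_lift_apply {ι k F : Type*} [DecidableEq ι] [AddMonoid ι]
    [CommSemiring k] [Semiring F] [Algebra k F] (𝒜 : ι → Submodule k F) [GradedAlgebra 𝒜]
    {σ : Multiplicative ι →* F} (hσ : ∀ i, σ (.ofAdd i) ∈ 𝒜 i) (p : AddMonoidAlgebra k ι) (i : ι) :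
    (decompose 𝒜 (lift k F ι σ p) i : F) = p.coeff i • σ (.ofAdd i) := by
  induction p using AddMonoidAlgebra.induction_linear with
  | zero => simp
  | add p q hp hq =>
    rw [map_add, decompose_add, DirectSum.add_apply, Submodule.coe_add, hp, hq, coeff_add,
      Finsupp.add_apply, add_smul]
  | single j c =>
    rw [lift_single]
    obtain rfl | hji := eq_or_ne j i
    · rw [decompose_of_mem_same 𝒜 (Submodule.smul_mem _ _ (hσ j)), coeff_single,
        Finsupp.single_eq_same]
    · rw [decompose_of_mem_ne 𝒜 (Submodule.smul_mem _ _ (hσ j)) hji, coeff_single,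
        Finsupp.single_eq_of_ne hji.symm, zero_smul]

theorem exists_algEquiv_addMonoidAlgebra_of_units_mem_graded {ι k F : Type*} [DecidableEq ι]
    [AddGroup ι] [Field k] [Semiring F] [Nontrivial F] [Algebra k F]
    (𝒜 : ι → Submodule k F) [GradedAlgebra 𝒜] (h𝒜₀ : ∀ x ∈ 𝒜 0, ∃ c : k, x = algebraMap k F c)
    (s : Multiplicative ι →* Fˣ) (hs : ∀ i, (s (.ofAdd i) : F) ∈ 𝒜 i) :
    ∃ e : F ≃ₐ[k] AddMonoidAlgebra k ι,
      ∀ i, ∀ x ∈ 𝒜 i, e x ∈ AddMonoidAlgebra.gradeBy k id i := by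
  set φ := AddMonoidAlgebra.lift k F ι ((Units.coeHom F).comp s)
  have hφ_single (i : ι) (c : k) : φ (.single i c) = c • (s (.ofAdd i) : F) :=
    AddMonoidAlgebra.lift_single _ _ _
  have hφ_decompose := AddMonoidAlgebra.decompose_lift_apply 𝒜 (σ := (Units.coeHom F).comp s) hs
  have hφ_inj : Function.Injective φ := by
    refine (injective_iff_map_eq_zero φ).mpr fun p hp => AddMonoidAlgebra.ext ?_
    ext i
    have hi := hφ_decompose p i
    rw [hp, decompose_zero, DirectSum.zero_apply, ZeroMemClass.coe_zero, eq_comm,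
      Algebra.smul_def] at hi
    exact (algebraMap k F).injective (by simpa using (Units.mul_left_eq_zero _).mp hi)
  have hmem_range {i : ι} {x : F} (hx : x ∈ 𝒜 i) : ∃ c : k, φ (.single i c) = x := by
    obtain ⟨c, rfl⟩ := Units.exists_eq_smul_of_mem_graded 𝒜 h𝒜₀ (hs i) hx
    exact ⟨c, hφ_single i c⟩
  have hφ_surj : Function.Surjective φ := by
    intro x
    have hle : iSup 𝒜 ≤ Subalgebra.toSubmodule φ.range :=
      iSup_le fun i x hx => (hmem_range hx).elim fun c hc => ⟨_, hc⟩
    exact hle ((Decomposition.isInternal 𝒜).submodule_iSup_eq_top ▸ Submodule.mem_top)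
  refine ⟨(AlgEquiv.ofBijective φ ⟨hφ_inj, hφ_surj⟩).symm, fun i x hx => ?_⟩
  obtain ⟨c, rfl⟩ := hmem_range hx
  rw [← AlgEquiv.ofBijective_apply φ ⟨hφ_inj, hφ_surj⟩, AlgEquiv.symm_apply_apply]
  exact AddMonoidAlgebra.single_mem_gradeBy id i c

theorem gradedField_over_rootClosed_iso_groupAlgebra_general
    (G : AddSubgroup ℚ)
    (k : Type*) [Field k]
    (hroot : ∀ (m : ℕ) (c : k), 0 < m → ∃ c' : k, c' ^ m = c)
    (F : Type*) [CommRing F] [Algebra k F]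
    (𝒜 : ↥G → Submodule k F) [GradedAlgebra 𝒜]
    (hdeg0 : ∀ x ∈ 𝒜 0, ∃ c : k, x = algebraMap k F c)
    (hfield : ∀ x : F, x ≠ 0 → SetLike.IsHomogeneousElem 𝒜 x → IsUnit x)
    (hsupp : ∀ g : ↥G, 𝒜 g ≠ ⊥) :
    ∃ e : F ≃ₐ[k] AddMonoidAlgebra k ↥G,
      ∀ (g : ↥G), ∀ x ∈ 𝒜 g, e x ∈ AddMonoidAlgebra.gradeBy k id g := by
  have hunit (g : ↥G) : ∃ u : Fˣ, (u : F) ∈ 𝒜 g := by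
    obtain ⟨x, hx, hx0⟩ := (Submodule.ne_bot_iff _).mp (hsupp g)
    obtain ⟨u, rfl⟩ := hfield x hx0 ⟨g, hx⟩
    exact ⟨u, hx⟩
  obtain ⟨x₀, -, hx₀⟩ := (Submodule.ne_bot_iff _).mp (hsupp 0)
  have : Nontrivial F := nontrivial_of_ne x₀ 0 hx₀
  let _ := Units.divisibleByIntOfExistsPowEq hroot
  obtain ⟨s, hs⟩ := exists_monoidHom_units_mem_graded 𝒜 hdeg0 hunit
  exact exists_algEquiv_addMonoidAlgebra_of_units_mem_graded 𝒜 hdeg0 s hs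

/-- Let `G ≤ ℚ` be an increasing union of cyclic subgroups `(1/nᵢ)ℤ` with
`nᵢ ∣ nᵢ₊₁`, let `k` be a root-closed field, and let `F` be a `G`-graded field
with `F₀ = k` and `F_g ≠ 0` for all `g ∈ G`.  Then `F` is isomorphic, as a
`G`-graded `k`-algebra, to the group algebra `k[G]`. -/
theorem gradedField_over_rootClosed_iso_groupAlgebra
    (G : AddSubgroup ℚ) (n : ℕ → ℕ)
    (hn0 : ∀ i, n i ≠ 0) (hdvd : ∀ i, n i ∣ n (i + 1))
    (hG : ∀ q : ℚ, q ∈ G ↔ ∃ i, ∃ m : ℤ, q = (m : ℚ) / (n i))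
    (k : Type*) [Field k]
    (hroot : ∀ (m : ℕ) (c : k), 0 < m → ∃ c' : k, c' ^ m = c)
    (F : Type*) [CommRing F] [Algebra k F]
    (𝒜 : ↥G → Submodule k F) [GradedAlgebra 𝒜]
    (hdeg0 : ∀ x ∈ 𝒜 0, ∃ c : k, x = algebraMap k F c)
    (hfield : ∀ x : F, x ≠ 0 → SetLike.IsHomogeneousElem 𝒜 x → IsUnit x)
    (hsupp : ∀ g : ↥G, 𝒜 g ≠ ⊥) :
    ∃ e : F ≃ₐ[k] AddMonoidAlgebra k ↥G,
      ∀ (g : ↥G), ∀ x ∈ 𝒜 g, e x ∈ AddMonoidAlgebra.gradeBy k id g :=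
  gradedField_over_rootClosed_iso_groupAlgebra_general G k hroot F 𝒜 hdeg0 hfield hsupp
end

section
/- Let R be a Noetherian integral domain graded by the nonnegative rational numbers, i.e., R = ⊕_{g ∈ ℚ_{≥0}} R_g with R_g R_h ⊆ R_{g+h}. Then R is a finitely generated algebra over R_0. -/
/-!
Since `R` is Noetherian, its irrelevant ideal `R₊ = ⨁_{d > 0} R_d` is generated by finitely many
homogeneous elements `t₁, …, tₖ` of positive degrees, all at least some `δ > 0`. A homogeneous
`x ∈ R_d` with `d > 0` is then `∑ cⱼ tⱼ`, and comparing degree-`d` parts writes it as a combination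
of the `tⱼ` with homogeneous coefficients of degree `d - deg tⱼ ≤ d - δ`. Induction on `n` with
`d ≤ n δ`, which covers every degree because `ℚ≥0` is Archimedean, puts every `R_d` in the ring
generated by `R₀` and the `tⱼ`.
-/

open DirectSum HomogeneousIdeal

lemma Finset.exists_pos_forall_exists_le {α ι : Type*} [Zero ι] [LinearOrder ι]
    {P : α → ι → Prop} {d : ι} (hd : 0 < d) (s : Finset α) (hs : ∀ x ∈ s, ∃ i, 0 < i ∧ P x i) :
    ∃ δ, 0 < δ ∧ ∀ x ∈ s, ∃ i, δ ≤ i ∧ P x i := by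
  classical
  induction s using Finset.induction_on with
  | empty => exact ⟨d, hd, by simp⟩
  | insert a s _ ih =>
    obtain ⟨δ, hδ, hδs⟩ := ih fun x hx => hs x (Finset.mem_insert_of_mem hx)
    obtain ⟨i, hi, hai⟩ := hs a (Finset.mem_insert_self a s)
    refine ⟨min δ i, lt_min hδ hi, fun x hx => ?_⟩
    rcases Finset.mem_insert.mp hx with rfl | hx
    · exact ⟨i, min_le_right δ i, hai⟩
    · obtain ⟨j, hj, hxj⟩ := hδs x hx
      exact ⟨j, (min_le_left δ i).trans hj, hxj⟩

namespace GradedRing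

section PartialOrder

variable {ι A σ : Type*} [DecidableEq ι] [AddCommMonoid ι] [PartialOrder ι]
  [CanonicallyOrderedAdd ι] [Ring A] [SetLike σ A] [AddSubmonoidClass σ A]
  (𝒜 : ι → σ) [GradedRing 𝒜]

theorem exists_finset_homogeneous_span_eq_irrelevant [IsNoetherianRing A] :
    ∃ s : Finset A, (∀ x ∈ s, ∃ i, 0 < i ∧ x ∈ 𝒜 i) ∧ Ideal.span (s : Set A) = (𝒜₊).toIdeal := by
  obtain ⟨s, hs, hspan⟩ := (Submodule.fg_span_iff_fg_span_finset_subset _).mp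
    (irrelevant_eq_span 𝒜 ▸ IsNoetherian.noetherian (𝒜₊).toIdeal)
  refine ⟨s, fun x hx => ?_, hspan.symm.trans (irrelevant_eq_span 𝒜).symm⟩
  simpa using hs hx

variable [Sub ι] [OrderedSub ι] [IsOrderedCancelAddMonoid ι]

theorem grade_subset_closure_of_le_nsmul {s : Set A} {δ : ι}
    (hspan : (𝒜₊).toIdeal ≤ Ideal.span s) (hs : ∀ t ∈ s, ∃ i, δ ≤ i ∧ t ∈ 𝒜 i) (n : ℕ) :
    ∀ d ≤ n • δ, (𝒜 d : Set A) ⊆ Subring.closure ((𝒜 0 : Set A) ∪ s) := by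
  set C := Subring.closure ((𝒜 0 : Set A) ∪ s)
  have zero_subset : (𝒜 0 : Set A) ⊆ C := fun x hx => Subring.subset_closure (Or.inl hx)
  induction n with
  | zero =>
    intro d hd
    rw [zero_nsmul, nonpos_iff_eq_zero] at hd
    exact hd ▸ zero_subset
  | succ n ih =>
    intro d hd x hx
    obtain rfl | hd0 := eq_zero_or_pos d
    · exact zero_subset hx
    obtain ⟨c, hcs, rfl⟩ := Submodule.mem_span_set.mp (hspan (mem_irrelevant_of_mem 𝒜 hd0 hx))
    rw [← decompose_of_mem_same 𝒜 hx, ← proj_apply, Finsupp.sum, map_sum]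
    refine sum_mem fun t ht => ?_
    obtain ⟨i, hδi, hti⟩ := hs t (hcs ht)
    rw [proj_apply, smul_eq_mul]
    by_cases hid : i ≤ d
    · rw [coe_decompose_mul_of_right_mem_of_le 𝒜 hti hid]
      refine mul_mem (ih _ ?_ (SetLike.coe_mem _)) (Subring.subset_closure (Or.inr (hcs ht)))
      calc d - i ≤ (n + 1) • δ - δ := tsub_le_tsub hd hδi
        _ = n • δ := by rw [succ_nsmul, add_tsub_cancel_right]
    · rw [coe_decompose_mul_of_right_mem_of_not_le 𝒜 hti hid]
      exact zero_mem C

end PartialOrder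

section LinearOrder

variable {ι A σ : Type*} [DecidableEq ι] [AddCommMonoid ι] [LinearOrder ι]
  [IsOrderedCancelAddMonoid ι] [CanonicallyOrderedAdd ι] [Sub ι] [OrderedSub ι] [Archimedean ι]
  [Ring A] [SetLike σ A] [AddSubmonoidClass σ A] (𝒜 : ι → σ) [GradedRing 𝒜]

theorem exists_finset_subring_closure_eq_top [IsNoetherianRing A] :
    ∃ s : Finset A, Subring.closure ((𝒜 0 : Set A) ∪ s) = ⊤ := by
  obtain ⟨s, hs, hspan⟩ := exists_finset_homogeneous_span_eq_irrelevant 𝒜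
  have grade_subset (d : ι) : (𝒜 d : Set A) ⊆ Subring.closure ((𝒜 0 : Set A) ∪ s) := by
    obtain rfl | hd := eq_zero_or_pos d
    · exact fun x hx => Subring.subset_closure (Or.inl hx)
    obtain ⟨δ, hδ, hsδ⟩ := s.exists_pos_forall_exists_le hd hs
    obtain ⟨n, hn⟩ := Archimedean.arch d hδ
    exact grade_subset_closure_of_le_nsmul 𝒜 hspan.ge hsδ n d hn
  classical
  refine ⟨s, eq_top_iff.mpr fun r _ => ?_⟩
  rw [← sum_support_decompose 𝒜 r]
  exact sum_mem fun d _ => grade_subset d (SetLike.coe_mem _)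

end LinearOrder

end GradedRing

theorem nnrat_graded_noetherian_domain_finitely_generated_general
    (R : Type*) [CommRing R] [IsNoetherianRing R]
    (𝒜 : ℚ≥0 → AddSubgroup R) [GradedRing 𝒜] :
    ∃ s : Finset R, Subring.closure ((𝒜 0 : Set R) ∪ s) = ⊤ :=
  GradedRing.exists_finset_subring_closure_eq_top 𝒜

/-- Let `R` be a Noetherian domain graded by the nonnegative rationals.  Then
`R` is a finitely generated algebra over its degree-zero subring `R₀`: there is
a finite set `s` of elements of `R` such that `R` is generated, as a ring, by
`R₀` together with `s`. -/
theorem nnrat_graded_noetherian_domain_finitely_generated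
    (R : Type*) [CommRing R] [IsDomain R] [IsNoetherianRing R]
    (𝒜 : ℚ≥0 → AddSubgroup R) [GradedRing 𝒜] :
    ∃ s : Finset R, Subring.closure ((𝒜 0 : Set R) ∪ s) = ⊤ :=
  nnrat_graded_noetherian_domain_finitely_generated_general R 𝒜
end
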